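/- arXiv:2303.11822 — 3 statements merged into one kernel-verified Lean document; each statement's English description precedes it below -/
import Mathlib

section
/- Let n be odd, m ∈ [1, n-1], d = gcd(m,n), n₁ = n/d. The number of vectors (a_1,...,a_k) with 1 ≤ a_1 < ... < a_k ≤ (n-1)/2 for which a_i ≡ ±a_j (mod n₁) for some i < j is at most 4·C(k,2)·(⌊n/n₁⌋+1)·binomial((n-1)/2, k-1); in particular it is O_k(n^k/n₁). -/
open Finset

open scoped Classical in
lemma bad_slice_nat_bound (n m k : ℕ) (hn : Odd n) (hn1 : 1 < n)
    (hm : 1 ≤ m) (hm' : m ≤ n - 1) (n₁ : ℕ) (hn₁ : n₁ = n / Nat.gcd m n) :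
    Nat.card {a : Fin k → ℤ //
        StrictMono a ∧ (∀ i, 1 ≤ a i ∧ a i ≤ ((n : ℤ) - 1) / 2) ∧
        ∃ i j : Fin k, i < j ∧
          (a i ≡ a j [ZMOD (n₁ : ℤ)] ∨ a i ≡ -a j [ZMOD (n₁ : ℤ)])} ≤
      4 * Nat.choose k 2 * (n / n₁ + 1) * Nat.choose ((n - 1) / 2) (k - 1) := by
  have hgcdpos : 0 < Nat.gcd m n := Nat.gcd_pos_of_pos_left n hm
  have hgcddvd : Nat.gcd m n ∣ n := Nat.gcd_dvd_right m n
  have hn₁pos : 0 < n₁ := by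
    rw [hn₁]
    exact Nat.div_pos (Nat.le_of_dvd (by omega) hgcddvd) hgcdpos
  -- the integer bound `M` equals the natural number `(n-1)/2`
  set N : ℕ := (n - 1) / 2 with hN
  have hM : ((n : ℤ) - 1) / 2 = (N : ℤ) := by
    rw [hN]; omega
  cases k with
  | zero =>
      have : IsEmpty {a : Fin 0 → ℤ //
          StrictMono a ∧ (∀ i, 1 ≤ a i ∧ a i ≤ ((n : ℤ) - 1) / 2) ∧
          ∃ i j : Fin 0, i < j ∧
            (a i ≡ a j [ZMOD (n₁ : ℤ)] ∨ a i ≡ -a j [ZMOD (n₁ : ℤ)])} := by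
        constructor
        rintro ⟨a, -, -, i, -⟩
        exact i.elim0
      simp [Nat.card_of_isEmpty]
  | succ k' =>
  set A := {a : Fin (k' + 1) → ℤ //
      StrictMono a ∧ (∀ i, 1 ≤ a i ∧ a i ≤ ((n : ℤ) - 1) / 2) ∧
      ∃ i j : Fin (k' + 1), i < j ∧
        (a i ≡ a j [ZMOD (n₁ : ℤ)] ∨ a i ≡ -a j [ZMOD (n₁ : ℤ)])} with hA
  set T := ↥((univ : Finset (Fin (k' + 1))).offDiag) × Bool × Fin (n / n₁ + 1) ×
      ↥(Finset.powersetCard k' (Finset.Icc (1 : ℤ) (N : ℤ))) with hT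
  -- the witnesses
  have key : ∀ x : A, ∃ i j : Fin (k' + 1), i < j ∧
      (x.1 i ≡ x.1 j [ZMOD (n₁ : ℤ)] ∨ x.1 i ≡ -x.1 j [ZMOD (n₁ : ℤ)]) :=
    fun x => x.2.2.2
  -- construct the injection
  have hbound : ∀ (x : A) (t : Fin (k' + 1)), 1 ≤ x.1 t ∧ x.1 t ≤ (N : ℤ) := by
    intro x t
    have h := x.2.2.1 t
    exact ⟨h.1, by rw [← hM]; exact h.2⟩
  let I : A → Fin (k' + 1) := fun x => (key x).choose
  let J : A → Fin (k' + 1) := fun x => (key x).choose_spec.choose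
  have hIJ : ∀ x : A, I x < J x ∧
      (x.1 (I x) ≡ x.1 (J x) [ZMOD (n₁ : ℤ)] ∨ x.1 (I x) ≡ -x.1 (J x) [ZMOD (n₁ : ℤ)]) :=
    fun x => (key x).choose_spec.choose_spec
  let F : A → T := fun x =>
    ⟨⟨(I x, J x),
        Finset.mem_offDiag.2 ⟨Finset.mem_univ _, Finset.mem_univ _, ne_of_lt (hIJ x).1⟩⟩,
      if x.1 (I x) ≡ x.1 (J x) [ZMOD (n₁ : ℤ)] then true else false,
      ⟨(x.1 (I x)).toNat / n₁, by
        have h1 := (hbound x (I x)).1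
        have h2 := (hbound x (I x)).2
        have h3 : (x.1 (I x)).toNat ≤ n := by
          have hNn : N ≤ n := by omega
          omega
        have := Nat.div_le_div_right (c := n₁) h3
        omega⟩,
      ⟨Finset.image (fun t : Fin k' => x.1 ((I x).succAbove t)) univ, by
        rw [Finset.mem_powersetCard]
        constructor
        · intro y hy
          rcases Finset.mem_image.1 hy with ⟨t, -, rfl⟩
          rcases hbound x ((I x).succAbove t) with ⟨h1, h2⟩
          exact Finset.mem_Icc.2 ⟨h1, h2⟩
        · rw [show (fun t : Fin k' => x.1 ((I x).succAbove t)) = x.1 ∘ (I x).succAbove from rfl,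
            Finset.card_image_of_injective _
            (x.2.1.comp (Fin.strictMono_succAbove (I x))).injective]
          simp⟩⟩
  have hFinj : Function.Injective F := by
    intro x y hxy
    have hIx : I x = I y := congrArg (fun z : T => z.1.1.1) hxy
    have hJx : J x = J y := congrArg (fun z : T => z.1.1.2) hxy
    have hε : (if x.1 (I x) ≡ x.1 (J x) [ZMOD (n₁ : ℤ)] then true else false)
        = (if y.1 (I y) ≡ y.1 (J y) [ZMOD (n₁ : ℤ)] then true else false) :=
      congrArg (fun z : T => z.2.1) hxy
    have hq : (x.1 (I x)).toNat / n₁ = (y.1 (I y)).toNat / n₁ :=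
      congrArg (fun z : T => (z.2.2.1 : ℕ)) hxy
    have hS : Finset.image (fun t : Fin k' => x.1 ((I x).succAbove t)) univ
        = Finset.image (fun t : Fin k' => y.1 ((I y).succAbove t)) univ :=
      congrArg (fun z : T => (z.2.2.2 : Finset ℤ)) hxy
    -- restrictions agree
    set S := Finset.image (fun t : Fin k' => x.1 ((I x).succAbove t)) univ with hSdef
    have hcard : S.card = k' := by
      rw [hSdef, show (fun t : Fin k' => x.1 ((I x).succAbove t)) = x.1 ∘ (I x).succAbove from rfl,
        Finset.card_image_of_injective _
        (x.2.1.comp (Fin.strictMono_succAbove (I x))).injective]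
      simp
    have hrx : (fun t : Fin k' => x.1 ((I x).succAbove t)) = S.orderEmbOfFin hcard :=
      Finset.orderEmbOfFin_unique hcard
        (fun t => Finset.mem_image_of_mem _ (Finset.mem_univ t))
        (x.2.1.comp (Fin.strictMono_succAbove (I x)))
    have hry : (fun t : Fin k' => y.1 ((I y).succAbove t)) = S.orderEmbOfFin hcard :=
      Finset.orderEmbOfFin_unique hcard
        (fun t => hS ▸ Finset.mem_image_of_mem _ (Finset.mem_univ t))
        (y.2.1.comp (Fin.strictMono_succAbove (I y)))
    have hrest : ∀ t : Fin k', x.1 ((I x).succAbove t) = y.1 ((I x).succAbove t) := by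
      intro t
      have h1 := congrFun hrx t
      have h2 := congrFun hry t
      rw [hIx] at h1 ⊢
      rw [h1, h2]
    -- values at J agree
    have hJne : J x ≠ I x := ne_of_gt (hIJ x).1
    obtain ⟨tJ, htJ⟩ := Fin.exists_succAbove_eq hJne
    have hvJ : x.1 (J x) = y.1 (J x) := by
      rw [← htJ]
      have := hrest tJ
      rw [hIx] at this ⊢
      exact this
    -- values at I agree
    have hmod : x.1 (I x) % (n₁ : ℤ) = y.1 (I y) % (n₁ : ℤ) := by
      by_cases hc : x.1 (I x) ≡ x.1 (J x) [ZMOD (n₁ : ℤ)]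
      · rw [if_pos hc] at hε
        by_cases hc' : y.1 (I y) ≡ y.1 (J y) [ZMOD (n₁ : ℤ)]
        · calc x.1 (I x) % (n₁ : ℤ) = x.1 (J x) % (n₁ : ℤ) := hc
            _ = y.1 (J y) % (n₁ : ℤ) := by rw [← hJx, hvJ]
            _ = y.1 (I y) % (n₁ : ℤ) := hc'.symm
        · rw [if_neg hc'] at hε; simp at hε
      · rw [if_neg hc] at hε
        have hx2 : x.1 (I x) ≡ -x.1 (J x) [ZMOD (n₁ : ℤ)] := (hIJ x).2.resolve_left hc
        by_cases hc' : y.1 (I y) ≡ y.1 (J y) [ZMOD (n₁ : ℤ)]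
        · rw [if_pos hc'] at hε; simp at hε
        · have hy2 : y.1 (I y) ≡ -y.1 (J y) [ZMOD (n₁ : ℤ)] := (hIJ y).2.resolve_left hc'
          calc x.1 (I x) % (n₁ : ℤ) = (-x.1 (J x)) % (n₁ : ℤ) := hx2
            _ = (-y.1 (J y)) % (n₁ : ℤ) := by rw [← hJx, hvJ]
            _ = y.1 (I y) % (n₁ : ℤ) := hy2.symm
    have hvI : x.1 (I x) = y.1 (I y) := by
      have hx0 : (0 : ℤ) ≤ x.1 (I x) := le_trans (by norm_num) (hbound x (I x)).1
      have hy0 : (0 : ℤ) ≤ y.1 (I y) := le_trans (by norm_num) (hbound y (I y)).1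
      have ex : x.1 (I x) = (n₁ : ℤ) * (x.1 (I x) / (n₁ : ℤ)) + x.1 (I x) % (n₁ : ℤ) :=
        (Int.mul_ediv_add_emod _ _).symm
      have ey : y.1 (I y) = (n₁ : ℤ) * (y.1 (I y) / (n₁ : ℤ)) + y.1 (I y) % (n₁ : ℤ) :=
        (Int.mul_ediv_add_emod _ _).symm
      have dx : x.1 (I x) / (n₁ : ℤ) = (((x.1 (I x)).toNat / n₁ : ℕ) : ℤ) := by
        rw [Int.natCast_div]
        congr 1
        omega
      have dy : y.1 (I y) / (n₁ : ℤ) = (((y.1 (I y)).toNat / n₁ : ℕ) : ℤ) := by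
        rw [Int.natCast_div]
        congr 1
        omega
      rw [ex, ey, dx, dy, hq, hmod]
    -- conclude
    apply Subtype.ext
    funext t
    by_cases ht : t = I x
    · rw [ht]
      rw [show I x = I y from hIx] at hvI ⊢
      nth_rewrite 2 [← hIx] at hvI ⊢
      exact hvI
    · obtain ⟨s, hs⟩ := Fin.exists_succAbove_eq (Ne.symm (fun h => ht h.symm))
      rw [← hs]
      exact hrest s
  -- counting
  have hcount : Nat.card A ≤ Nat.card T := Nat.card_le_card_of_injective F hFinj
  have hcardT : Nat.card T = ((k' + 1) * (k' + 1) - (k' + 1)) * (2 * ((n / n₁ + 1) * (N.choose k'))) := by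
    have step : Nat.card T = Nat.card ↥((univ : Finset (Fin (k' + 1))).offDiag) *
        (Nat.card Bool * (Nat.card (Fin (n / n₁ + 1)) *
          Nat.card ↥(Finset.powersetCard k' (Finset.Icc (1 : ℤ) (N : ℤ))))) := by
      rw [hT, Nat.card_prod, Nat.card_prod, Nat.card_prod]
    rw [step, Nat.card_eq_finsetCard, Nat.card_eq_finsetCard, Finset.offDiag_card,
      Finset.card_powersetCard, Int.card_Icc]
    have hNt : ((N : ℤ) + 1 - 1).toNat = N := by omega
    rw [hNt]
    simp only [Nat.card_eq_fintype_card, Fintype.card_bool, Fintype.card_fin, Finset.card_univ]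
  have hfinal : ((k' + 1) * (k' + 1) - (k' + 1)) * (2 * ((n / n₁ + 1) * (N.choose k')))
      = 4 * Nat.choose (k' + 1) 2 * (n / n₁ + 1) * Nat.choose N (k' + 1 - 1) := by
    have h1 : Nat.choose (k' + 1) 2 = (k' + 1) * k' / 2 := by
      rw [Nat.choose_two_right]
      simp
    have heven : 2 ∣ (k' + 1) * k' := by
      rw [mul_comm]
      exact (Nat.even_mul_succ_self k').two_dvd
    have haux : ∀ p : ℕ, 2 ∣ p → 4 * (p / 2) = 2 * p := by
      rintro p ⟨t, rfl⟩
      omega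
    have h2 : 4 * Nat.choose (k' + 1) 2 = 2 * ((k' + 1) * k') := by
      rw [h1]
      exact haux _ heven
    have h3 : (k' + 1) * (k' + 1) - (k' + 1) = (k' + 1) * k' := by
      ring_nf
      omega
    simp only [Nat.add_sub_cancel]
    rw [h3]
    calc (k' + 1) * k' * (2 * ((n / n₁ + 1) * N.choose k'))
        = (2 * ((k' + 1) * k')) * (n / n₁ + 1) * N.choose k' := by ring
      _ = 4 * Nat.choose (k' + 1) 2 * (n / n₁ + 1) * N.choose k' := by rw [h2]
  calc Nat.card A ≤ Nat.card T := hcount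
    _ = _ := by rw [hcardT, hfinal]

/-- Bound on the bad slice `S''(n,k,m)`: for `n` odd, `1 ≤ m ≤ n-1`, `n₁ = n/gcd(m,n)`,
the number of strictly increasing tuples `1 ≤ a₁ < ⋯ < a_k ≤ (n-1)/2` with
`a_i ≡ ±a_j (mod n₁)` for some `i < j` is at most
`4·C(k,2)·(⌊n/n₁⌋+1)·binom((n-1)/2, k-1)`; in particular it is `O_k(n^k/n₁)`. -/
theorem bad_slice_bound (n m k : ℕ) (hn : Odd n) (hn1 : 1 < n)
    (hm : 1 ≤ m) (hm' : m ≤ n - 1) (n₁ : ℕ) (hn₁ : n₁ = n / Nat.gcd m n) :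
    (Nat.card {a : Fin k → ℤ //
        StrictMono a ∧ (∀ i, 1 ≤ a i ∧ a i ≤ ((n : ℤ) - 1) / 2) ∧
        ∃ i j : Fin k, i < j ∧
          (a i ≡ a j [ZMOD (n₁ : ℤ)] ∨ a i ≡ -a j [ZMOD (n₁ : ℤ)])} ≤
      4 * Nat.choose k 2 * (n / n₁ + 1) * Nat.choose ((n - 1) / 2) (k - 1)) ∧
    ∃ C : ℝ, 0 < C ∧ ∀ n' m' : ℕ, Odd n' → 1 < n' → 1 ≤ m' → m' ≤ n' - 1 →
      (Nat.card {a : Fin k → ℤ //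
          StrictMono a ∧ (∀ i, 1 ≤ a i ∧ a i ≤ ((n' : ℤ) - 1) / 2) ∧
          ∃ i j : Fin k, i < j ∧
            (a i ≡ a j [ZMOD ((n' / Nat.gcd m' n' : ℕ) : ℤ)] ∨
             a i ≡ -a j [ZMOD ((n' / Nat.gcd m' n' : ℕ) : ℤ)])} : ℝ) ≤
        C * (n' : ℝ) ^ k / (n' / Nat.gcd m' n' : ℕ) := by
  constructor
  · exact bad_slice_nat_bound n m k hn hn1 hm hm' n₁ hn₁
  · refine ⟨8 * Nat.choose k 2 + 1, by positivity, ?_⟩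
    intro n' m' hn' hn1' hm1' hm2'
    set d := Nat.gcd m' n' with hd
    set n₁' : ℕ := n' / d with hn₁'
    have hdpos : 0 < d := Nat.gcd_pos_of_pos_left n' hm1'
    have hddvd : d ∣ n' := Nat.gcd_dvd_right m' n'
    have hn₁pos : 0 < n₁' := Nat.div_pos (Nat.le_of_dvd (by omega) hddvd) hdpos
    have hmul : n₁' * d = n' := Nat.div_mul_cancel hddvd
    have hdiv : n' / n₁' = d := Nat.div_div_self hddvd (by omega)
    have hnat := bad_slice_nat_bound n' m' k hn' hn1' hm1' hm2' n₁' hn₁'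
    rw [hdiv] at hnat
    set cnt := Nat.card {a : Fin k → ℤ //
        StrictMono a ∧ (∀ i, 1 ≤ a i ∧ a i ≤ ((n' : ℤ) - 1) / 2) ∧
        ∃ i j : Fin k, i < j ∧
          (a i ≡ a j [ZMOD ((n' / Nat.gcd m' n' : ℕ) : ℤ)] ∨
           a i ≡ -a j [ZMOD ((n' / Nat.gcd m' n' : ℕ) : ℤ)])} with hcnt
    clear_value cnt
    clear hcnt
    have hnat' : cnt ≤ 4 * Nat.choose k 2 * (d + 1) * Nat.choose ((n' - 1) / 2) (k - 1) := hnat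
    have hchoose : Nat.choose ((n' - 1) / 2) (k - 1) ≤ n' ^ (k - 1) :=
      le_trans (Nat.choose_le_pow _ _) (Nat.pow_le_pow_left (le_trans (Nat.div_le_self _ _) (Nat.sub_le _ _)) _)
    have hnatbound : cnt ≤ 8 * Nat.choose k 2 * d * n' ^ (k - 1) := by
      calc cnt ≤ 4 * Nat.choose k 2 * (d + 1) * Nat.choose ((n' - 1) / 2) (k - 1) := hnat'
        _ ≤ 4 * Nat.choose k 2 * (2 * d) * n' ^ (k - 1) := by
            apply Nat.mul_le_mul
            · exact Nat.mul_le_mul_left _ (by omega)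
            · exact hchoose
        _ = 8 * Nat.choose k 2 * d * n' ^ (k - 1) := by ring
    have hR : (cnt : ℝ) ≤ 8 * Nat.choose k 2 * d * (n' : ℝ) ^ (k - 1) := by
      calc (cnt : ℝ) ≤ ((8 * Nat.choose k 2 * d * n' ^ (k - 1) : ℕ) : ℝ) := by
            exact_mod_cast hnatbound
        _ = 8 * Nat.choose k 2 * d * (n' : ℝ) ^ (k - 1) := by push_cast; ring
    have hn'R : (0:ℝ) < n' := by positivity
    have hn₁R : (0:ℝ) < (n₁' : ℝ) := by exact_mod_cast hn₁pos
    have hrw : (8 * Nat.choose k 2 + 1 : ℝ) * (n' : ℝ) ^ k / (n₁' : ℝ)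
        ≥ 8 * Nat.choose k 2 * d * (n' : ℝ) ^ (k - 1) := by
      rw [ge_iff_le, le_div_iff₀ hn₁R]
      have hdn : (d : ℝ) * (n₁' : ℝ) = (n' : ℝ) := by
        rw [← Nat.cast_mul, mul_comm d n₁', hmul]
      rcases Nat.eq_zero_or_pos k with hk0 | hkpos
      · subst hk0
        have h0 : Nat.choose 0 2 = 0 := rfl
        rw [h0]
        push_cast
        have hd1 : (1:ℝ) ≤ (d:ℝ) := by exact_mod_cast hdpos
        nlinarith
      · have hk1 : k = (k - 1) + 1 := by omega
        have hpow : (n' : ℝ) ^ k = (n' : ℝ) ^ (k - 1) * (n' : ℝ) := by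
          conv_lhs => rw [hk1]
          rw [pow_succ]
        rw [hpow]
        have h1 : 8 * (Nat.choose k 2 : ℝ) * d * (n' : ℝ) ^ (k - 1) * (n₁' : ℝ)
            = 8 * (Nat.choose k 2 : ℝ) * (n' : ℝ) ^ (k - 1) * ((d : ℝ) * (n₁' : ℝ)) := by ring
        rw [h1, hdn]
        have hc : (0:ℝ) ≤ (Nat.choose k 2 : ℝ) := by positivity
        nlinarith [pow_pos hn'R (k - 1)]
    calc (cnt : ℝ) ≤ 8 * Nat.choose k 2 * d * (n' : ℝ) ^ (k - 1) := hR
      _ ≤ (8 * Nat.choose k 2 + 1 : ℝ) * (n' : ℝ) ^ k / (n₁' : ℝ) := hrw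
      _ = (8 * Nat.choose k 2 + 1 : ℝ) * (n' : ℝ) ^ k / ((n' / Nat.gcd m' n' : ℕ) : ℝ) := rfl
end

section
/- With S''(n,k) = ⋃_{m=0}^{n-1} S''(n,k,m) (disjoint union over slices), there is a constant C_k depending only on k such that #S''(n,k) < C_k · n^k · ∑_{d|n} φ(d)/d ≤ C_k · d(n) · n^k, where d(n) is the number of divisors of n and φ is Euler's totient. Consequently #S''(n,k) = O_k(n^{k+ε}) for every ε > 0. -/
open Finset

/-- The `m`-slice `S''(n,k,m)` of "bad" tuples: strictly increasing tuples
`1 ≤ a₁ < ⋯ < a_k ≤ (n-1)/2` with `a_i ≡ ±a_j (mod n/gcd(m,n))` for some `i < j`;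
for `m = 0` the slice is all of `A_k(n)`. -/
def badSlice (n k m : ℕ) : Set (Fin k → ℤ) :=
  if m = 0 then
    {a | StrictMono a ∧ ∀ i, 1 ≤ a i ∧ a i ≤ ((n : ℤ) - 1) / 2}
  else
    {a | StrictMono a ∧ (∀ i, 1 ≤ a i ∧ a i ≤ ((n : ℤ) - 1) / 2) ∧
      ∃ i j : Fin k, i < j ∧
        (a i ≡ a j [ZMOD ((n / Nat.gcd m n : ℕ) : ℤ)] ∨
         a i ≡ -a j [ZMOD ((n / Nat.gcd m n : ℕ) : ℤ)])}

/-- `#S''(n,k) = ∑_{m=0}^{n-1} #S''(n,k,m)`. -/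
noncomputable def badCount (n k : ℕ) : ℕ := ∑ m ∈ Finset.range n, Nat.card (badSlice n k m)

open Real
open scoped Nat

/-! Split `S''(n,k)` into its slices. The slice `m = 0` lies in the box `[1,(n-1)/2]^k`, of size
at most `n^k`. For `m ≠ 0` put `g = gcd(m,n)` and `t = n/g`: a bad tuple has a pair `i < j` with
`a_i ≡ ±a_j (mod t)`, and once the other coordinates are fixed this leaves at most `2(g+1)` values
for `a_i`, so the slice has `O(k² g n^{k-1})` elements. Summing over `m` and using
`∑_{m<n} gcd(m,n) = ∑_{d∣n} (n/d) φ(d) = n ∑_{d∣n} φ(d)/d` gives the first bound, `φ(d) ≤ d` the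
second, and the divisor bound `d(n) = O_ε(n^ε)` (compare `d(n)/n^ε = ∏ (a+1)/p^{aε}` factor by
factor: only the primes `p < 2^{1/ε}` contribute factors larger than one, each at most
`1 + 1/(ε log 2)`) the last. -/

namespace Nat

theorem sum_range_gcd_eq (n : ℕ) :
    ∑ m ∈ range n, m.gcd n = ∑ d ∈ n.divisors, n / d * φ d := by
  rcases n.eq_zero_or_pos with rfl | hn
  · simp
  rw [← sum_div_divisors n, ← sum_fiberwise_of_maps_to (g := fun m => n.gcd m)
    (t := n.divisors) fun m _ => mem_divisors.2 ⟨gcd_dvd_left n m, hn.ne'⟩]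
  refine sum_congr rfl fun d hd => ?_
  have hdn := dvd_of_mem_divisors hd
  rw [sum_congr rfl fun m hm => (gcd_comm m n).trans (mem_filter.1 hm).2, sum_const, smul_eq_mul,
    ← totient_div_of_dvd hdn, Nat.div_div_self hdn hn.ne', mul_comm]

theorem sum_range_gcd_eq_mul_sum_totient_div (n : ℕ) :
    (∑ m ∈ range n, m.gcd n : ℝ) = n * ∑ d ∈ n.divisors, (φ d : ℝ) / d := by
  rw [← Nat.cast_sum, sum_range_gcd_eq, Nat.cast_sum, mul_sum]
  refine sum_congr rfl fun d hd => ?_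
  have hd0 : (d : ℝ) ≠ 0 := by exact_mod_cast (pos_of_mem_divisors hd).ne'
  rw [Nat.cast_mul, Nat.cast_div (dvd_of_mem_divisors hd) hd0]
  ring

theorem one_le_sum_totient_div {n : ℕ} (hn : n ≠ 0) : 1 ≤ ∑ d ∈ n.divisors, (φ d : ℝ) / d := by
  simpa using single_le_sum (f := fun d => (φ d : ℝ) / d) (fun d _ => by positivity)
    (one_mem_divisors.2 hn)

theorem sum_totient_div_le_card_divisors (n : ℕ) :
    ∑ d ∈ n.divisors, (φ d : ℝ) / d ≤ #n.divisors := by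
  calc ∑ d ∈ n.divisors, (φ d : ℝ) / d ≤ ∑ _d ∈ n.divisors, (1 : ℝ) :=
        sum_le_sum fun d _ => div_le_one_of_le₀ (by exact_mod_cast totient_le d) d.cast_nonneg
    _ = #n.divisors := by simp

end Nat

section Counting

variable {ι α : Type*} [Fintype ι] [DecidableEq ι] [DecidableEq α]

theorem Fintype.card_filter_piFinset_const_le (s : Finset α) (i : ι) (p : (ι → α) → Prop)
    [DecidablePred p] {F : ℕ} (hF : ∀ a : ι → α, #{x ∈ s | p (Function.update a i x)} ≤ F) :
    #{a ∈ piFinset fun _ => s | p a} ≤ F * #s ^ (card ι - 1) := by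
  rcases s.eq_empty_or_nonempty with rfl | ⟨x₀, hx₀⟩
  · have : Nonempty ι := ⟨i⟩
    simp
  set base : Finset (ι → α) := {b ∈ piFinset fun _ => s | b i = x₀}
  calc #{a ∈ piFinset fun _ => s | p a}
      ≤ #(base.biUnion fun b =>
          {x ∈ s | p (Function.update b i x)}.image (Function.update b i)) := by
        refine card_le_card fun a ha => ?_
        obtain ⟨ha, hpa⟩ := mem_filter.1 ha
        rw [Fintype.mem_piFinset] at ha
        refine mem_biUnion.2 ⟨Function.update a i x₀, ?_, mem_image.2 ⟨a i, ?_, ?_⟩⟩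
        · simp only [base, mem_filter, Fintype.mem_piFinset, Function.update_self, and_true]
          intro l
          rcases eq_or_ne l i with rfl | hl
          · simpa using hx₀
          · simpa [hl] using ha l
        · simpa [ha i] using hpa
        · simp
    _ ≤ ∑ b ∈ base, #({x ∈ s | p (Function.update b i x)}.image (Function.update b i)) :=
        card_biUnion_le
    _ ≤ ∑ _b ∈ base, F := sum_le_sum fun b _ => card_image_le.trans (hF b)
    _ = F * #s ^ (card ι - 1) := by
        rw [sum_const, card_filter_piFinset_const_eq_of_mem s i hx₀, smul_eq_mul, mul_comm]

end Counting

theorem Int.card_filter_modEq_Icc_le {t : ℤ} (ht : 0 < t) {M : ℤ} {g : ℕ} (hM : M ≤ t * g)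
    (c : ℤ) : #{x ∈ Icc 1 M | x ≡ c [ZMOD t]} ≤ g + 1 := by
  calc #{x ∈ Icc 1 M | x ≡ c [ZMOD t]} ≤ #(Icc (0 : ℤ) g) := by
        refine card_le_card_of_injOn (· / t) (fun x hx => ?_) fun x hx y hy hxy => ?_
        · simp only [coe_filter, Set.mem_ofPred_eq, mem_Icc] at hx
          simp only [coe_Icc, Set.mem_Icc]
          exact ⟨Int.ediv_nonneg (by omega) ht.le,
            Int.ediv_le_of_le_mul ht (by linarith [hx.1.2])⟩
        · simp only [coe_filter, Set.mem_ofPred_eq] at hx hy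
          have hmod : x % t = y % t := hx.2.trans hy.2.symm
          rw [← Int.mul_ediv_add_emod x t, ← Int.mul_ediv_add_emod y t, hmod]
          simp only at hxy
          rw [hxy]
    _ = g + 1 := by simp

noncomputable def halfBox (n k : ℕ) : Finset (Fin k → ℤ) :=
  Fintype.piFinset fun _ => Icc 1 (((n : ℤ) - 1) / 2)

theorem card_Icc_one_half_le (n : ℕ) : #(Icc (1 : ℤ) (((n : ℤ) - 1) / 2)) ≤ n := by
  rw [Int.card_Icc]; omega

theorem badSlice_subset_halfBox (n k m : ℕ) : badSlice n k m ⊆ halfBox n k := by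
  intro a ha
  have hbounds : ∀ i, 1 ≤ a i ∧ a i ≤ ((n : ℤ) - 1) / 2 := by
    unfold badSlice at ha
    split_ifs at ha
    exacts [ha.2, ha.2.1]
  simp only [halfBox, mem_coe, Fintype.mem_piFinset, mem_Icc]
  exact hbounds

theorem natCard_badSlice_le_of_subset {n k m : ℕ} {s : Finset (Fin k → ℤ)}
    (h : badSlice n k m ⊆ s) : Nat.card (badSlice n k m) ≤ #s :=
  (Nat.card_mono s.finite_toSet h).trans (Nat.card_eq_finsetCard s).le

theorem natCard_badSlice_zero_le (n k : ℕ) : Nat.card (badSlice n k 0) ≤ n ^ k := by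
  calc Nat.card (badSlice n k 0) ≤ #(halfBox n k) :=
        natCard_badSlice_le_of_subset (badSlice_subset_halfBox n k 0)
    _ ≤ n ^ k := by
        rw [halfBox, Fintype.card_piFinset_const]
        exact Nat.pow_le_pow_left (card_Icc_one_half_le n) k

theorem badSlice_subset_biUnion {n k m : ℕ} (hm : m ≠ 0) :
    badSlice n k m ⊆ ({p : Fin k × Fin k | p.1 < p.2} : Finset _).biUnion fun p =>
      {a ∈ halfBox n k | a p.1 ≡ a p.2 [ZMOD ((n / m.gcd n : ℕ) : ℤ)] ∨
        a p.1 ≡ -a p.2 [ZMOD ((n / m.gcd n : ℕ) : ℤ)]} := by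
  intro a ha
  have hbox := badSlice_subset_halfBox n k m ha
  simp only [badSlice, hm, if_false, Set.mem_ofPred_eq] at ha
  obtain ⟨-, -, i, j, hij, hcong⟩ := ha
  simp only [mem_coe, mem_biUnion, mem_filter, mem_univ, true_and]
  exact ⟨(i, j), hij, hbox, hcong⟩

theorem natCard_badSlice_le {n k m : ℕ} (hn : n ≠ 0) (hm : m ≠ 0) :
    Nat.card (badSlice n k m) ≤ 4 * k ^ 2 * m.gcd n * n ^ (k - 1) := by
  set g := m.gcd n
  set t : ℤ := ((n / g : ℕ) : ℤ)
  have hg : 0 < g := Nat.gcd_pos_of_pos_right m (Nat.pos_of_ne_zero hn)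
  have hnt : (n : ℤ) = t * g := by
    rw [← Nat.cast_mul, Nat.div_mul_cancel (Nat.gcd_dvd_right m n)]
  have ht : 0 < t := by
    have : (0 : ℤ) < n := by omega
    nlinarith
  have hM : ((n : ℤ) - 1) / 2 ≤ t * g := by omega
  have hfiber : ∀ (i j : Fin k), i ≠ j → ∀ a : Fin k → ℤ,
      #{x ∈ Icc 1 (((n : ℤ) - 1) / 2) |
        Function.update a i x i ≡ Function.update a i x j [ZMOD t] ∨
        Function.update a i x i ≡ -Function.update a i x j [ZMOD t]} ≤ 4 * g := by
    intro i j hij a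
    simp only [Function.update_self, Function.update_of_ne hij.symm]
    rw [filter_or]
    have h₁ := Int.card_filter_modEq_Icc_le ht hM (a j)
    have h₂ := Int.card_filter_modEq_Icc_le ht hM (-a j)
    have := card_union_le {x ∈ Icc 1 (((n : ℤ) - 1) / 2) | x ≡ a j [ZMOD t]}
      {x ∈ Icc 1 (((n : ℤ) - 1) / 2) | x ≡ -a j [ZMOD t]}
    omega
  calc Nat.card (badSlice n k m)
      ≤ _ := natCard_badSlice_le_of_subset (badSlice_subset_biUnion hm)
    _ ≤ ∑ p ∈ ({p : Fin k × Fin k | p.1 < p.2} : Finset _), 4 * g * n ^ (k - 1) := by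
        refine card_biUnion_le.trans (sum_le_sum fun p hp => ?_)
        have hne : p.1 ≠ p.2 := (mem_filter.1 hp).2.ne
        refine (Fintype.card_filter_piFinset_const_le _ p.1 _ (hfiber p.1 p.2 hne)).trans ?_
        rw [Fintype.card_fin]
        exact Nat.mul_le_mul_left _ (Nat.pow_le_pow_left (card_Icc_one_half_le n) _)
    _ ≤ k ^ 2 * (4 * g * n ^ (k - 1)) := by
        rw [sum_const, smul_eq_mul]
        refine Nat.mul_le_mul_right _ ((card_filter_le _ _).trans ?_)
        simp [sq]
    _ = 4 * k ^ 2 * g * n ^ (k - 1) := by ring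

theorem Real.natCast_add_one_le_rpow_mul {ε : ℝ} (hε : 0 < ε) {p : ℝ} (hp : 2 ^ ε⁻¹ ≤ p)
    (a : ℕ) : (a + 1 : ℝ) ≤ p ^ (a * ε) :=
  calc (a + 1 : ℝ) ≤ 2 ^ a := by exact_mod_cast Nat.lt_two_pow_self
    _ = (2 ^ ε⁻¹) ^ (a * ε) := by
        rw [← rpow_mul zero_le_two, show ε⁻¹ * (a * ε) = a by field_simp, rpow_natCast]
    _ ≤ p ^ (a * ε) := rpow_le_rpow (by positivity) hp (by positivity)

theorem Real.natCast_add_one_le_mul_rpow {ε : ℝ} (hε : 0 < ε) {p : ℝ} (hp : 2 ≤ p) (a : ℕ) :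
    (a + 1 : ℝ) ≤ (1 + (ε * log 2)⁻¹) * p ^ (a * ε) := by
  set c := ε * log 2
  have hc : 0 < c := mul_pos hε (log_pos one_lt_two)
  calc (a + 1 : ℝ) ≤ (1 + c⁻¹) * (1 + a * c) := by
        have expand : (1 + c⁻¹) * (1 + a * c) = a + 1 + (a * c + c⁻¹) := by field_simp; ring
        rw [expand]
        exact le_add_of_nonneg_right (by positivity)
    _ ≤ (1 + c⁻¹) * 2 ^ (a * ε) := by
        rw [rpow_def_of_pos two_pos]
        gcongr
        linarith [add_one_le_exp (log 2 * (a * ε))]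
    _ ≤ (1 + c⁻¹) * p ^ (a * ε) := by gcongr

theorem Nat.card_divisors_le_mul_rpow {ε : ℝ} (hε : 0 < ε) :
    ∃ C > 0, ∀ n : ℕ, n ≠ 0 → (#n.divisors : ℝ) ≤ C * (n : ℝ) ^ ε := by
  set B : ℝ := 1 + (ε * Real.log 2)⁻¹
  have hB : 1 ≤ B := le_add_of_nonneg_right (by have := Real.log_pos one_lt_two; positivity)
  set N := ⌈(2 : ℝ) ^ ε⁻¹⌉₊
  refine ⟨B ^ N, by positivity, fun n hn => ?_⟩
  set w : ℕ → ℝ := fun p => if (p : ℝ) < 2 ^ ε⁻¹ then B else 1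
  have hfactor : ∀ p ∈ n.primeFactors,
      (n.factorization p + 1 : ℝ) ≤ w p * (p : ℝ) ^ (n.factorization p * ε) := by
    intro p hp
    have h2p : (2 : ℝ) ≤ p := by exact_mod_cast (prime_of_mem_primeFactors hp).two_le
    simp only [w]
    split_ifs with hsmall
    · exact natCast_add_one_le_mul_rpow hε h2p _
    · simpa using natCast_add_one_le_rpow_mul hε (not_lt.1 hsmall) _
  have hweights : ∏ p ∈ n.primeFactors, w p ≤ B ^ N := by
    rw [← prod_filter, prod_const]
    refine pow_le_pow_right₀ hB ((card_le_card fun p hp => ?_).trans (card_range N).le)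
    have hlt : (p : ℝ) < N := (mem_filter.1 hp).2.trans_le (Nat.le_ceil _)
    exact mem_range.2 (by exact_mod_cast hlt)
  have hrpow : ∏ p ∈ n.primeFactors, (p : ℝ) ^ (n.factorization p * ε) = (n : ℝ) ^ ε := by
    simp_rw [rpow_natCast_mul (Nat.cast_nonneg _)]
    rw [finsetProd_rpow _ _ fun p _ => by positivity]
    exact_mod_cast congrArg (fun m : ℕ => (m : ℝ) ^ ε)
      (prod_primeFactors_pow_factorization hn).symm
  calc (#n.divisors : ℝ) = ∏ p ∈ n.primeFactors, (n.factorization p + 1 : ℝ) := by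
        rw [card_divisors hn]; push_cast; rfl
    _ ≤ ∏ p ∈ n.primeFactors, w p * (p : ℝ) ^ (n.factorization p * ε) :=
        prod_le_prod (fun p _ => by positivity) hfactor
    _ = (∏ p ∈ n.primeFactors, w p) * (n : ℝ) ^ ε := by rw [prod_mul_distrib, hrpow]
    _ ≤ B ^ N * (n : ℝ) ^ ε := by gcongr

theorem badCount_le (k : ℕ) {n : ℕ} (hn : n ≠ 0) :
    badCount n k ≤ n ^ k + 4 * k ^ 2 * n ^ (k - 1) * ∑ m ∈ range n, m.gcd n := by
  rw [badCount, ← add_sum_erase _ _ (mem_range.2 (Nat.pos_of_ne_zero hn)), mul_sum]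
  gcongr
  · exact natCard_badSlice_zero_le n k
  calc ∑ m ∈ (range n).erase 0, Nat.card (badSlice n k m)
      ≤ ∑ m ∈ (range n).erase 0, 4 * k ^ 2 * n ^ (k - 1) * m.gcd n :=
        sum_le_sum fun m hm => (natCard_badSlice_le hn (ne_of_mem_erase hm)).trans_eq (by ring)
    _ ≤ ∑ m ∈ range n, 4 * k ^ 2 * n ^ (k - 1) * m.gcd n :=
        sum_le_sum_of_subset (erase_subset _ _)

theorem badCount_lt_mul_sum_totient_div {k : ℕ} (hk : k ≠ 0) {n : ℕ} (hn : n ≠ 0) :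
    (badCount n k : ℝ) < (4 * k ^ 2 + 2) * n ^ k * ∑ d ∈ n.divisors, (φ d : ℝ) / d := by
  set S := ∑ d ∈ n.divisors, (φ d : ℝ) / d
  have hS : 1 ≤ S := Nat.one_le_sum_totient_div hn
  have hnk : (0 : ℝ) < n ^ k := by positivity
  calc (badCount n k : ℝ) ≤ n ^ k + 4 * k ^ 2 * n ^ (k - 1) * (n * S) := by
        rw [← Nat.sum_range_gcd_eq_mul_sum_totient_div]
        exact_mod_cast badCount_le k hn
    _ = n ^ k + 4 * k ^ 2 * n ^ k * S := by rw [← pow_sub_one_mul hk]; ring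
    _ < (4 * k ^ 2 + 2) * n ^ k * S := by nlinarith

/-- There is a constant `C_k > 0` depending only on `k` such that
`#S''(n,k) < C_k · n^k · ∑_{d∣n} φ(d)/d ≤ C_k · d(n) · n^k`; consequently
`#S''(n,k) = O_k(n^{k+ε})` for every `ε > 0`. -/
theorem badCount_bound (k : ℕ) (hk : 1 ≤ k) :
    (∃ C : ℝ, 0 < C ∧ ∀ n : ℕ, Odd n → 1 < n →
      (badCount n k : ℝ) < C * (n : ℝ) ^ k *
          (∑ d ∈ n.divisors, (Nat.totient d : ℝ) / (d : ℝ)) ∧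
      C * (n : ℝ) ^ k * (∑ d ∈ n.divisors, (Nat.totient d : ℝ) / (d : ℝ)) ≤
        C * (n.divisors.card : ℝ) * (n : ℝ) ^ k) ∧
    ∀ ε : ℝ, 0 < ε → ∃ C : ℝ, 0 < C ∧ ∀ n : ℕ, Odd n → 1 < n →
      (badCount n k : ℝ) ≤ C * (n : ℝ) ^ ((k : ℝ) + ε) := by
  have hk0 : k ≠ 0 := by omega
  refine ⟨⟨4 * k ^ 2 + 2, by positivity, fun n _ hn =>
    ⟨badCount_lt_mul_sum_totient_div hk0 (by omega), ?_⟩⟩, fun ε hε => ?_⟩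
  · rw [mul_right_comm]
    gcongr
    exact Nat.sum_totient_div_le_card_divisors n
  obtain ⟨C, hC, hdiv⟩ := Nat.card_divisors_le_mul_rpow hε
  refine ⟨(4 * k ^ 2 + 2) * C, by positivity, fun n _ hn => ?_⟩
  have hn0 : n ≠ 0 := by omega
  calc (badCount n k : ℝ) ≤ (4 * k ^ 2 + 2) * n ^ k * ∑ d ∈ n.divisors, (φ d : ℝ) / d :=
        (badCount_lt_mul_sum_totient_div hk0 hn0).le
    _ ≤ (4 * k ^ 2 + 2) * n ^ k * #n.divisors := by
        gcongr; exact Nat.sum_totient_div_le_card_divisors n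
    _ ≤ (4 * k ^ 2 + 2) * n ^ k * (C * n ^ ε) := by gcongr; exact hdiv n hn0
    _ = (4 * k ^ 2 + 2) * C * n ^ ((k : ℝ) + ε) := by
        rw [rpow_add (by positivity), rpow_natCast]; ring
end

section
/- Let I = [c,d] ⊆ [-k,k] and let Ω_n(I) be the set of points (a_1/n,...,a_k/n) with integers 0 ≤ a_i < n/2 satisfying ∑_i cos(2πa_i/n) ∈ [c,d]. Then #Ω_n(I) = n^k·Vol(B_k(I)) + O_k(n^{k-1}), where B_k(I) = {x ∈ [0,1/2)^k : ∑_i cos(2πx_i) ∈ [c,d]}. -/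
open Real Finset MeasureTheory

/-- `B_k(I)` for `I = [c,d]`: points of the box `[0,1/2)^k` with
`∑ᵢ cos(2πxᵢ) ∈ [c,d]`. -/
def boxRegion (k : ℕ) (c d : ℝ) : Set (Fin k → ℝ) :=
  {x | (∀ i, 0 ≤ x i ∧ x i < 1 / 2) ∧
    (∑ i, Real.cos (2 * Real.pi * x i)) ∈ Set.Icc c d}

/-!
Write `N_j(s)` for the number of `a ∈ ℕ^j` with `2aᵢ < n` and `∑ cos(2π aᵢ/n) ∈ s`, and `V_j(s)`
for the volume of `{x ∈ [0,1/2)^j | ∑ cos(2π xᵢ) ∈ s}`. Fixing the first coordinate gives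
`N_{j+1}(s) = ∑_{2b<n} N_j(s - cos(2πb/n))` and `V_{j+1}(s) = ∫_0^{1/2} V_j(s - cos(2πx)) dx`.
When `s` is a lower set, the integrand is monotone in `x` and takes values in `[0,1]`, so
`n` times the integral differs from the sum of its values at the points `b/n` by at most `1`.
Induction on `j` then gives `|N_j(s) - n^j V_j(s)| ≤ j n^(j-1)`, and `[c,d]` is the difference
of the lower sets `(-∞,d]` and `(-∞,c)`.
-/

open Set

noncomputable section

def cosSum {j : ℕ} (x : Fin j → ℝ) : ℝ := ∑ i, cos (2 * π * x i)

@[simp]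
lemma cosSum_zero (x : Fin 0 → ℝ) : cosSum x = 0 := by simp [cosSum]

lemma cosSum_cons {j : ℕ} (b : ℝ) (y : Fin j → ℝ) :
    cosSum (Fin.cons b y : Fin (j + 1) → ℝ) = cos (2 * π * b) + cosSum y := by
  simp [cosSum, Fin.sum_univ_succ]

lemma measurable_cosSum (j : ℕ) : Measurable (cosSum : (Fin j → ℝ) → ℝ) :=
  Finset.measurable_sum _ fun i _ => by fun_prop

def cosRegion (j : ℕ) (s : Set ℝ) : Set (Fin j → ℝ) :=
  univ.pi (fun _ => Set.Ico 0 (1 / 2)) ∩ cosSum ⁻¹' s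

def cosVolume (j : ℕ) (s : Set ℝ) : ℝ := volume.real (cosRegion j s)

section Region

variable {j : ℕ} {s t : Set ℝ}

lemma cosRegion_mono (h : s ⊆ t) : cosRegion j s ⊆ cosRegion j t :=
  inter_subset_inter_right _ (preimage_mono h)

lemma cosRegion_sdiff (s t : Set ℝ) : cosRegion j (s \ t) = cosRegion j s \ cosRegion j t := by
  simp only [cosRegion, preimage_sdiff, inter_sdiff_distrib_left]

lemma measurableSet_cosRegion (hs : MeasurableSet s) : MeasurableSet (cosRegion j s) :=
  (MeasurableSet.univ_pi fun _ => measurableSet_Ico).inter (measurable_cosSum j hs)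

lemma volume_cosRegion_le_one (j : ℕ) (s : Set ℝ) : volume (cosRegion j s) ≤ 1 :=
  calc volume (cosRegion j s) ≤ volume (univ.pi fun _ : Fin j => Set.Ico (0 : ℝ) (1 / 2)) :=
        measure_mono inter_subset_left
    _ = ∏ _i : Fin j, ENNReal.ofReal (1 / 2) := by simp [volume_pi_pi]
    _ ≤ 1 := Finset.prod_le_one' fun _ _ => ENNReal.ofReal_le_one.2 (by norm_num)

lemma volume_cosRegion_ne_top (j : ℕ) (s : Set ℝ) : volume (cosRegion j s) ≠ ⊤ :=
  ne_top_of_le_ne_top ENNReal.one_ne_top (volume_cosRegion_le_one j s)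

lemma cosVolume_nonneg : 0 ≤ cosVolume j s := measureReal_nonneg

lemma cosVolume_le_one : cosVolume j s ≤ 1 :=
  ENNReal.toReal_le_of_le_ofReal zero_le_one (by simpa using volume_cosRegion_le_one j s)

lemma cosVolume_mono (h : s ⊆ t) : cosVolume j s ≤ cosVolume j t :=
  measureReal_mono (cosRegion_mono h) (volume_cosRegion_ne_top j t)

lemma cosVolume_sdiff (hts : t ⊆ s) (ht : MeasurableSet t) :
    cosVolume j (s \ t) = cosVolume j s - cosVolume j t := by
  rw [cosVolume, cosRegion_sdiff, measureReal_sdiff (cosRegion_mono hts)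
    (measurableSet_cosRegion ht) (volume_cosRegion_ne_top j s)]
  rfl

lemma cosVolume_zero (s : Set ℝ) : cosVolume 0 s = s.indicator 1 0 := by
  by_cases h : (0 : ℝ) ∈ s
  · have : cosRegion 0 s = univ := by ext x; simp [cosRegion, h]
    simp [cosVolume, this, h, Measure.real, volume_pi]
  · have : cosRegion 0 s = ∅ := by ext x; simp [cosRegion, h]
    simp [cosVolume, this, h]

end Region

lemma volume_eq_lintegral_volume_cons_mem {j : ℕ} {S : Set (Fin (j + 1) → ℝ)}
    (hS : MeasurableSet S) :
    volume S = ∫⁻ b : ℝ, volume {y : Fin j → ℝ | Fin.cons b y ∈ S} := by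
  have hmp := measurePreserving_piFinSuccAbove (fun _ : Fin (j + 1) => (volume : Measure ℝ)) 0
  set e := MeasurableEquiv.piFinSuccAbove (fun _ : Fin (j + 1) => ℝ) 0
  have he : volume S =
      (volume.prod (Measure.pi fun _ => volume) : Measure (ℝ × (Fin j → ℝ))) (e.symm ⁻¹' S) := by
    rw [← hmp.map_eq, MeasurableEquiv.map_apply]
    congr 1
    ext x
    simp [e, MeasurableEquiv.piFinSuccAbove]
  rw [he, Measure.prod_apply (e.symm.measurable hS)]
  congr 1
  ext b
  congr 1
  ext y
  simp [e, MeasurableEquiv.piFinSuccAbove, Fin.insertNthEquiv, Fin.insertNth_zero']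

section Recursion

variable {j : ℕ} {s : Set ℝ}

lemma cons_mem_cosRegion_succ {b : ℝ} {y : Fin j → ℝ} :
    (Fin.cons b y : Fin (j + 1) → ℝ) ∈ cosRegion (j + 1) s ↔
      b ∈ Set.Ico 0 (1 / 2) ∧ y ∈ cosRegion j ((cos (2 * π * b) + ·) ⁻¹' s) := by
  simp only [cosRegion, mem_inter_iff, mem_univ_pi, Fin.forall_fin_succ, Fin.cons_zero,
    Fin.cons_succ, Set.mem_preimage, cosSum_cons, and_assoc]

lemma volume_cosRegion_succ (hs : MeasurableSet s) :
    volume (cosRegion (j + 1) s) =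
      ∫⁻ b in Set.Ico 0 (1 / 2), volume (cosRegion j ((cos (2 * π * b) + ·) ⁻¹' s)) := by
  rw [volume_eq_lintegral_volume_cons_mem (measurableSet_cosRegion hs),
    ← lintegral_indicator measurableSet_Ico]
  congr 1
  funext b
  by_cases hb : b ∈ Set.Ico (0 : ℝ) (1 / 2)
  · simp only [cons_mem_cosRegion_succ, hb, true_and, Set.indicator_of_mem]
    rfl
  · rw [Set.indicator_of_notMem hb]
    simp only [cons_mem_cosRegion_succ, hb, false_and]
    simp

lemma antitone_volume_cosRegion_preimage_add (hs : IsLowerSet s) :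
    Antitone fun c : ℝ => volume (cosRegion j ((c + ·) ⁻¹' s)) :=
  fun _ _ hc => measure_mono <| cosRegion_mono fun _ hx => hs (by simpa using hc) hx

lemma antitone_cosVolume_preimage_add (hs : IsLowerSet s) :
    Antitone fun c : ℝ => cosVolume j ((c + ·) ⁻¹' s) :=
  fun _ _ hc => ENNReal.toReal_mono (volume_cosRegion_ne_top _ _)
    (antitone_volume_cosRegion_preimage_add hs hc)

lemma cosVolume_succ (hs : IsLowerSet s) :
    cosVolume (j + 1) s = ∫ b in (0 : ℝ)..1 / 2, cosVolume j ((cos (2 * π * b) + ·) ⁻¹' s) := by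
  have hmeas : Measurable fun b : ℝ => volume (cosRegion j ((cos (2 * π * b) + ·) ⁻¹' s)) :=
    (antitone_volume_cosRegion_preimage_add hs).measurable.comp (by fun_prop)
  rw [intervalIntegral.integral_of_le (by norm_num), ← setIntegral_congr_set Ico_ae_eq_Ioc,
    cosVolume, measureReal_def, volume_cosRegion_succ hs.ordConnected.measurableSet,
    ← integral_toReal hmeas.aemeasurable
      (ae_of_all _ fun _ => (volume_cosRegion_ne_top _ _).lt_top)]
  rfl

lemma monotoneOn_cosVolume_preimage_cos_add (hs : IsLowerSet s) :
    MonotoneOn (fun b : ℝ => cosVolume j ((cos (2 * π * b) + ·) ⁻¹' s)) (Set.Icc 0 (1 / 2)) := by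
  refine (antitone_cosVolume_preimage_add hs).comp_antitoneOn ?_
  intro x hx y hy hxy
  apply cos_le_cos_of_nonneg_of_le_pi
  all_goals nlinarith [pi_pos, hx.1, hy.2]

end Recursion

lemma abs_sum_range_sub_integral_le {f : ℝ → ℝ} {K : ℕ} {x M : ℝ} (hKx : (K : ℝ) ≤ x)
    (hxK : x ≤ K + 1) (hf : MonotoneOn f (Set.Icc 0 x))
    (hfM : ∀ u ∈ Set.Icc 0 x, f u ∈ Set.Icc 0 M) :
    |∑ i ∈ range (K + 1), f i - ∫ u in (0 : ℝ)..x, f u| ≤ M := by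
  have hK0 : (0 : ℝ) ≤ K := K.cast_nonneg
  have hf_int : IntegrableOn f (Set.Icc 0 x) := hf.integrableOn_isCompact isCompact_Icc
  have hhead : IntervalIntegrable f volume 0 K := by
    refine (hf_int.mono_set ?_).intervalIntegrable
    rw [uIcc_of_le hK0]
    exact Set.Icc_subset_Icc_right hKx
  have htail : IntervalIntegrable f volume K x := by
    refine (hf_int.mono_set ?_).intervalIntegrable
    rw [uIcc_of_le hKx]
    exact Set.Icc_subset_Icc_left hK0
  have hsplit := intervalIntegral.integral_add_adjacent_intervals hhead htail
  have hmonoK : MonotoneOn f (Set.Icc 0 (0 + K)) :=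
    hf.mono (by simpa using Set.Icc_subset_Icc_right hKx)
  have hsum_le : ∑ i ∈ range K, f i ≤ ∫ u in (0 : ℝ)..K, f u := by
    simpa using hmonoK.sum_le_integral
  have hle_sum : ∫ u in (0 : ℝ)..K, f u ≤ ∑ i ∈ range K, f (i + 1 : ℕ) := by
    simpa using hmonoK.integral_le_sum
  have htail_nonneg : 0 ≤ ∫ u in (K : ℝ)..x, f u :=
    intervalIntegral.integral_nonneg hKx fun u hu => (hfM u ⟨hK0.trans hu.1, hu.2⟩).1
  have hf0 := hfM 0 ⟨le_rfl, hK0.trans hKx⟩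
  have hM : 0 ≤ M := hf0.1.trans hf0.2
  have htail_le : ∫ u in (K : ℝ)..x, f u ≤ M :=
    calc ∫ u in (K : ℝ)..x, f u ≤ ∫ _ in (K : ℝ)..x, M :=
          intervalIntegral.integral_mono_on hKx htail intervalIntegrable_const
            fun u hu => (hfM u ⟨hK0.trans hu.1, hu.2⟩).2
      _ = (x - K) * M := by simp
      _ ≤ M := by nlinarith
  have hfK := hfM K ⟨hK0, hKx⟩
  have hsucc := sum_range_succ (fun i : ℕ => f i) K
  have hsucc' := sum_range_succ' (fun i : ℕ => f i) K
  rw [Nat.cast_zero] at hsucc'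
  rw [abs_le]
  constructor <;> linarith [hf0.1, hfK.2]

lemma abs_sum_cosVolume_sub_le {j : ℕ} {s : Set ℝ} (hs : IsLowerSet s) {n : ℕ} (hn : 0 < n) :
    |∑ b ∈ range ((n + 1) / 2), cosVolume j ((cos (2 * π * (b / n)) + ·) ⁻¹' s) -
      n * cosVolume (j + 1) s| ≤ 1 := by
  set g : ℝ → ℝ := fun b => cosVolume j ((cos (2 * π * b) + ·) ⁻¹' s)
  have hn' : (0 : ℝ) < n := Nat.cast_pos.2 hn
  obtain ⟨K, hK⟩ : ∃ K, (n + 1) / 2 = K + 1 := ⟨(n + 1) / 2 - 1, by omega⟩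
  have hKn : (K : ℝ) ≤ n / 2 ∧ (n : ℝ) / 2 ≤ K + 1 := by
    have h1 : ((2 * K : ℕ) : ℝ) ≤ n := Nat.cast_le.2 (by omega)
    have h2 : (n : ℝ) ≤ (2 * K + 2 : ℕ) := Nat.cast_le.2 (by omega)
    push_cast at h1 h2
    constructor <;> linarith
  have hf : MonotoneOn (fun u => g (u / n)) (Set.Icc 0 (n / 2)) := by
    refine (monotoneOn_cosVolume_preimage_cos_add hs).comp
      (fun u _ v _ huv => div_le_div_of_nonneg_right huv hn'.le) fun u hu => ?_
    refine ⟨div_nonneg hu.1 hn'.le, ?_⟩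
    rw [div_le_iff₀ hn']
    linarith [hu.2]
  have hint : ∫ u in (0 : ℝ)..n / 2, g (u / n) = n * cosVolume (j + 1) s := by
    rw [intervalIntegral.integral_comp_div g hn'.ne', zero_div,
      div_div_cancel_left' hn'.ne', cosVolume_succ hs, smul_eq_mul, one_div]
  rw [hK, ← hint]
  exact abs_sum_range_sub_integral_le hKn.1 hKn.2 hf fun _ _ => ⟨cosVolume_nonneg, cosVolume_le_one⟩

open Classical in
def latticeCount (j n : ℕ) (s : Set ℝ) : ℕ :=
  #{a ∈ Fintype.piFinset fun _ : Fin j => range ((n + 1) / 2) |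
    cosSum (fun i => (a i : ℝ) / n) ∈ s}

section Lattice

variable {j n : ℕ} {s t : Set ℝ}

lemma latticeCount_zero (n : ℕ) (s : Set ℝ) : (latticeCount 0 n s : ℝ) = s.indicator 1 0 := by
  by_cases h : (0 : ℝ) ∈ s <;> simp [latticeCount, h]

lemma cosSum_cons_div (b : ℕ) (y : Fin j → ℕ) :
    cosSum (fun i => ((Fin.cons b y : Fin (j + 1) → ℕ) i : ℝ) / n) =
      cos (2 * π * (b / n)) + cosSum (fun i => (y i : ℝ) / n) := by
  rw [show (fun i => ((Fin.cons b y : Fin (j + 1) → ℕ) i : ℝ) / n) =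
    (fun m : ℕ => (m : ℝ) / n) ∘ Fin.cons b y from rfl, Fin.comp_cons, cosSum_cons]
  rfl

lemma latticeCount_succ (j n : ℕ) (s : Set ℝ) :
    latticeCount (j + 1) n s =
      ∑ b ∈ range ((n + 1) / 2), latticeCount j n ((cos (2 * π * (b / n)) + ·) ⁻¹' s) := by
  classical
  have hpi : (Fintype.piFinset fun _ : Fin (j + 1) => range ((n + 1) / 2)) =
      (range ((n + 1) / 2) ×ˢ Fintype.piFinset fun _ : Fin j => range ((n + 1) / 2)).map
        (Fin.consEquiv fun _ => ℕ).toEmbedding := by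
    have := filter_piFinset_eq_map_consEquiv (fun _ : Fin (j + 1) => range ((n + 1) / 2))
      (fun _ => True)
    simp only [filter_true] at this
    exact this
  simp only [latticeCount, hpi, filter_map, card_map, card_filter, sum_product]
  refine sum_congr rfl fun b _ => sum_congr rfl fun y _ => ?_
  simp [Fin.consEquiv, cosSum_cons_div]

lemma latticeCount_sdiff (hts : t ⊆ s) :
    (latticeCount j n (s \ t) : ℝ) = latticeCount j n s - latticeCount j n t := by
  classical
  simp only [latticeCount, mem_sdiff, filter_and_not]
  have hsub : {a ∈ Fintype.piFinset fun _ : Fin j => range ((n + 1) / 2) |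
        cosSum (fun i => (a i : ℝ) / n) ∈ t} ⊆
      {a ∈ Fintype.piFinset fun _ : Fin j => range ((n + 1) / 2) |
        cosSum (fun i => (a i : ℝ) / n) ∈ s} :=
    monotone_filter_right _ fun _ _ h => hts h
  rw [card_sdiff_of_subset hsub, Nat.cast_sub (Finset.card_le_card hsub)]

lemma natCard_eq_latticeCount (j n : ℕ) (s : Set ℝ) :
    Nat.card {a : Fin j → ℕ // (∀ i, 2 * a i < n) ∧
      (∑ i, cos (2 * π * (a i : ℝ) / n)) ∈ s} = latticeCount j n s := by
  classical
  rw [latticeCount, ← Nat.card_eq_finsetCard]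
  refine Nat.card_congr (Equiv.subtypeEquivRight fun a => ?_)
  have h2 : ∀ i, 2 * a i < n ↔ a i < (n + 1) / 2 := fun i => by omega
  rw [Finset.mem_filter]
  simp only [Fintype.mem_piFinset, Finset.mem_range, cosSum, mul_div_assoc, h2]

end Lattice

theorem abs_latticeCount_sub_le {j n : ℕ} {s : Set ℝ} (hs : IsLowerSet s) (hn : 0 < n) :
    |(latticeCount j n s : ℝ) - n ^ j * cosVolume j s| ≤ j * n ^ (j - 1) := by
  induction j generalizing s with
  | zero => simp [latticeCount_zero, cosVolume_zero]
  | succ j ih =>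
    set sb : ℕ → Set ℝ := fun b => (cos (2 * π * (b / n)) + ·) ⁻¹' s
    have hterm : ∀ b, |(latticeCount j n (sb b) : ℝ) - n ^ j * cosVolume j (sb b)| ≤
        j * n ^ (j - 1) := fun b => ih (hs.preimage fun _ _ h => add_le_add_right h _)
    have hm : (((n + 1) / 2 : ℕ) : ℝ) ≤ n := Nat.cast_le.2 (by omega)
    have hpow : (n : ℝ) * (j * n ^ (j - 1)) = j * n ^ j := by
      cases j <;> simp [pow_succ]; ring
    have hsplit : (latticeCount (j + 1) n s : ℝ) - n ^ (j + 1) * cosVolume (j + 1) s =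
        ∑ b ∈ range ((n + 1) / 2), ((latticeCount j n (sb b) : ℝ) - n ^ j * cosVolume j (sb b)) +
          n ^ j * (∑ b ∈ range ((n + 1) / 2), cosVolume j (sb b) - n * cosVolume (j + 1) s) := by
      rw [latticeCount_succ, Nat.cast_sum, sum_sub_distrib, ← mul_sum]
      ring
    rw [hsplit]
    calc _ ≤ ∑ b ∈ range ((n + 1) / 2),
            |(latticeCount j n (sb b) : ℝ) - n ^ j * cosVolume j (sb b)| +
          n ^ j * |∑ b ∈ range ((n + 1) / 2), cosVolume j (sb b) - n * cosVolume (j + 1) s| := by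
          refine (abs_add_le _ _).trans (add_le_add (abs_sum_le_sum_abs _ _) ?_)
          rw [abs_mul, abs_of_nonneg (by positivity)]
      _ ≤ ((n + 1) / 2 : ℕ) * (j * n ^ (j - 1)) + n ^ j * 1 :=
          add_le_add ((sum_le_card_nsmul _ _ _ fun b _ => hterm b).trans (by simp))
            (mul_le_mul_of_nonneg_left (abs_sum_cosVolume_sub_le hs hn) (by positivity))
      _ ≤ n * (j * n ^ (j - 1)) + n ^ j := by
          rw [mul_one]
          gcongr
      _ = (j + 1 : ℕ) * n ^ (j + 1 - 1) := by
          rw [hpow]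
          push_cast
          ring

end

theorem lattice_point_count_general (k : ℕ) (c d : ℝ) (hcd : c ≤ d) :
    ∃ C : ℝ, 0 < C ∧ ∀ n : ℕ, Odd n → 1 < n →
      |(Nat.card {a : Fin k → ℕ // (∀ i, 2 * a i < n) ∧
          (∑ i, Real.cos (2 * Real.pi * (a i : ℝ) / (n : ℝ))) ∈ Set.Icc c d} : ℝ) -
        (n : ℝ) ^ k * (MeasureTheory.volume (boxRegion k c d)).toReal| ≤
      C * (n : ℝ) ^ (k - 1) := by
  refine ⟨2 * k + 1, by positivity, fun n _ hn => ?_⟩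
  have hIcc : Set.Icc c d = Set.Iic d \ Set.Iio c := by
    ext x
    simp
  have hsub : Set.Iio c ⊆ Set.Iic d := Set.Iio_subset_Iic_self.trans (Set.Iic_subset_Iic.2 hcd)
  have hbox : boxRegion k c d = cosRegion k (Set.Icc c d) := by
    ext x
    simp [boxRegion, cosRegion, cosSum]
  have hd := abs_latticeCount_sub_le (j := k) (isLowerSet_Iic d) (by omega : 0 < n)
  have hc := abs_latticeCount_sub_le (j := k) (isLowerSet_Iio c) (by omega : 0 < n)
  rw [natCard_eq_latticeCount, hbox, ← measureReal_def, ← cosVolume, hIcc,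
    latticeCount_sdiff hsub, cosVolume_sdiff hsub measurableSet_Iio]
  calc _ = |((latticeCount k n (Set.Iic d) : ℝ) - n ^ k * cosVolume k (Set.Iic d)) -
        ((latticeCount k n (Set.Iio c) : ℝ) - n ^ k * cosVolume k (Set.Iio c))| := by ring_nf
    _ ≤ k * n ^ (k - 1) + k * n ^ (k - 1) := (abs_sub _ _).trans (add_le_add hd hc)
    _ ≤ (2 * k + 1) * n ^ (k - 1) := by nlinarith [pow_pos (by positivity : (0 : ℝ) < n) (k - 1)]

/-- Lattice point count: for `I = [c,d] ⊆ [-k,k]`, the number of points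
`(a₁/n,…,a_k/n)` with integers `0 ≤ aᵢ < n/2` and `∑ᵢ cos(2πaᵢ/n) ∈ [c,d]`
equals `n^k·Vol(B_k(I)) + O_k(n^{k-1})`, the implied constant depending only on
`k` and the interval. -/
theorem lattice_point_count (k : ℕ) (hk : 1 ≤ k) (c d : ℝ)
    (hc : -(k : ℝ) ≤ c) (hcd : c ≤ d) (hd : d ≤ (k : ℝ)) :
    ∃ C : ℝ, 0 < C ∧ ∀ n : ℕ, Odd n → 1 < n →
      |(Nat.card {a : Fin k → ℕ // (∀ i, 2 * a i < n) ∧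
          (∑ i, Real.cos (2 * Real.pi * (a i : ℝ) / (n : ℝ))) ∈ Set.Icc c d} : ℝ) -
        (n : ℝ) ^ k * (MeasureTheory.volume (boxRegion k c d)).toReal| ≤
      C * (n : ℝ) ^ (k - 1) :=
  lattice_point_count_general k c d hcd
end
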